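/- For all real α > 0 and c > 0: ∫_{−∞}^0 ∫_{−∞}^{α√(−s)} (−x) e^{cx + c²s/2} dx ds = (2/c⁴)·( (1 − α²) − α³·Φ(α)/φ(α) ). In particular, this double integral equals 0 if and only if α³·Φ(α) = (1 − α²)·φ(α). -/

import Mathlib

open MeasureTheory

/-- Density of the standard normal distribution. -/
noncomputable def stdPdf (x : ℝ) : ℝ := (Real.sqrt (2 * Real.pi))⁻¹ * Real.exp (-x ^ 2 / 2)

/-- Cumulative distribution function of the standard normal distribution. -/
noncomputable def stdCdf (x : ℝ) : ℝ := ∫ u in Set.Iic x, stdPdf u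

open Set Real Filter intervalIntegral Topology

lemma expcInt (c b : ℝ) (hc : 0 < c) :
    IntegrableOn (fun x : ℝ => Real.exp (c * x)) (Set.Iic b) := by
  refine integrableOn_Iic_of_intervalIntegral_norm_bounded (Real.exp (c*b) / c) b
    (fun y => Continuous.integrableOn_Ioc (by continuity)) tendsto_id
    (Eventually.of_forall fun y => ?_)
  show (∫ x in y..b, ‖Real.exp (c * x)‖) ≤ _
  have : ∫ x in y..b, ‖Real.exp (c * x)‖ = (Real.exp (c*b) - Real.exp (c*y)) / c := by
    simp_rw [Real.norm_eq_abs, abs_of_pos (Real.exp_pos _)]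
    rw [intervalIntegral.integral_comp_mul_left (f := Real.exp) (c := c) (ne_of_gt hc)]
    rw [integral_exp]
    field_simp
    rw [smul_eq_mul]; field_simp
  rw [this]
  have := (Real.exp_pos (c*y)).le
  gcongr
  linarith [Real.exp_pos (c*y)]

lemma negxInt (c b : ℝ) (hc : 0 < c) :
    IntegrableOn (fun x : ℝ => -x * Real.exp (c * x)) (Set.Iic b) := by
  set M : ℝ := 2/c + max 0 (b * Real.exp (c/2 * b)) with hM
  have hM0 : 0 ≤ max 0 (b * Real.exp (c/2 * b)) := le_max_left _ _
  have key : ∀ x ≤ b, ‖-x * Real.exp (c * x)‖ ≤ M * Real.exp (c/2 * x) := by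
    intro x hx
    have hxb : |x| * Real.exp (c/2 * x) ≤ M := by
      rcases le_or_gt x 0 with h | h
      · have h1 : -(c/2 * x) ≤ Real.exp (-(c/2*x)) := (Real.add_one_le_exp _).trans' (by linarith)
        have h3 : -x ≤ (2/c) * Real.exp (-(c/2*x)) := by
          have := mul_le_mul_of_nonneg_left h1 (by positivity : (0:ℝ) ≤ 2/c)
          calc -x = (2/c) * (-(c/2 * x)) := by field_simp
          _ ≤ (2/c) * Real.exp (-(c/2*x)) := this
        have h4 : |x| * Real.exp (c/2 * x) ≤ 2/c := by
          rw [abs_of_nonpos h]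
          calc -x * Real.exp (c/2*x) ≤ (2/c) * Real.exp (-(c/2*x)) * Real.exp (c/2*x) :=
                mul_le_mul_of_nonneg_right h3 (Real.exp_pos _).le
          _ = 2/c := by rw [mul_assoc, ← Real.exp_add]; simp
        linarith
      · have hb' : x * Real.exp (c/2 * x) ≤ b * Real.exp (c/2 * b) := by
          apply mul_le_mul hx (Real.exp_le_exp.2 (by nlinarith)) (Real.exp_pos _).le (by linarith)
        rw [abs_of_pos h]
        have : b * Real.exp (c/2*b) ≤ max 0 (b * Real.exp (c/2 * b)) := le_max_right _ _
        have h2c : (0:ℝ) ≤ 2/c := by positivity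
        linarith
    have heq : ‖-x * Real.exp (c * x)‖ = |x| * Real.exp (c/2 * x) * Real.exp (c/2 * x) := by
      rw [norm_mul, Real.norm_eq_abs, abs_neg, Real.norm_eq_abs,
        abs_of_pos (Real.exp_pos _), mul_assoc, ← Real.exp_add]
      ring_nf
    rw [heq]
    exact mul_le_mul_of_nonneg_right hxb (Real.exp_pos _).le
  refine Integrable.mono' ((expcInt (c/2) b (by linarith)).const_mul M) ?_ ?_
  · exact (Continuous.aestronglyMeasurable (by continuity)).restrict
  · exact (ae_restrict_iff' measurableSet_Iic).mpr (Eventually.of_forall key)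

lemma negxLim (c : ℝ) (hc : 0 < c) :
    Tendsto (fun x : ℝ => (1/c^2 - x/c) * Real.exp (c * x)) atBot (𝓝 0) := by
  have e1 : Tendsto (fun x : ℝ => Real.exp (c * x)) atBot (𝓝 0) :=
    Real.tendsto_exp_atBot.comp (tendsto_id.const_mul_atBot hc)
  have e2 : Tendsto (fun x : ℝ => Real.exp (c/2 * x)) atBot (𝓝 0) :=
    Real.tendsto_exp_atBot.comp (tendsto_id.const_mul_atBot (by linarith))
  have hup : Tendsto (fun x : ℝ => (1/c^2) * Real.exp (c*x) + (2/c^2) * Real.exp (c/2*x))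
      atBot (𝓝 0) := by
    have := (e1.const_mul (1/c^2)).add (e2.const_mul (2/c^2))
    simpa using this
  refine tendsto_of_tendsto_of_tendsto_of_le_of_le' tendsto_const_nhds hup ?_ ?_
  · filter_upwards [Iic_mem_atBot (0:ℝ)] with x hx
    have h0 : x/c ≤ 0 := div_nonpos_of_nonpos_of_nonneg hx hc.le
    have h1 : (0:ℝ) < 1/c^2 := by positivity
    have h2 : (0:ℝ) < Real.exp (c * x) := Real.exp_pos _
    nlinarith
  · filter_upwards [Iic_mem_atBot (0:ℝ)] with x hx
    have h1 : -(c/2 * x) ≤ Real.exp (-(c/2*x)) := (Real.add_one_le_exp _).trans' (by linarith)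
    have h3 : -(x/c) ≤ (2/c^2) * Real.exp (-(c/2*x)) := by
      have := mul_le_mul_of_nonneg_left h1 (by positivity : (0:ℝ) ≤ 2/c^2)
      calc -(x/c) = (2/c^2) * (-(c/2 * x)) := by field_simp
      _ ≤ (2/c^2) * Real.exp (-(c/2*x)) := this
    have key : (1/c^2 - x/c) * Real.exp (c*x)
        ≤ (1/c^2) * Real.exp (c*x) + ((2/c^2) * Real.exp (-(c/2*x))) * Real.exp (c*x) := by
      nlinarith [Real.exp_pos (c*x)]
    calc (1/c^2 - x/c) * Real.exp (c*x)
        ≤ (1/c^2) * Real.exp (c*x) + ((2/c^2) * Real.exp (-(c/2*x))) * Real.exp (c*x) := key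
      _ = (1/c^2) * Real.exp (c*x) + (2/c^2) * Real.exp (c/2*x) := by
          rw [mul_assoc, ← Real.exp_add]; ring_nf

lemma innerIntegral (c b : ℝ) (hc : 0 < c) :
    (∫ x in Set.Iio b, -x * Real.exp (c * x)) = (1/c^2 - b/c) * Real.exp (c * b) := by
  have h1 : (∫ x in Set.Iio b, -x * Real.exp (c * x)) = ∫ x in Set.Iic b, -x * Real.exp (c * x) :=
    setIntegral_congr_set Iio_ae_eq_Iic
  rw [h1]
  have hderiv : ∀ x ∈ Set.Iic b,
      HasDerivAt (fun x : ℝ => (1/c^2 - x/c) * Real.exp (c * x)) (-x * Real.exp (c * x)) x := by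
    intro x _
    have h := ((hasDerivAt_id x).const_mul c).exp
    have h2 : HasDerivAt (fun x : ℝ => 1/c^2 - x/c) (-(1/c)) x := by
      have := ((hasDerivAt_id x).div_const c).const_sub (1/c^2)
      simpa only [mul_zero, add_zero, id_eq] using this
    have h3 := h2.mul (by simpa [mul_comm] using h)
    refine h3.congr_deriv ?_
    field_simp
    ring
  have := integral_Iic_of_hasDerivAt_of_tendsto' hderiv (negxInt c b hc) (negxLim c hc)
  rw [this]; ring

lemma gaussPolyInt (q0 q1 q2 : ℝ) :
    Integrable (fun v : ℝ => (q0 + q1*v + q2*v^2) * Real.exp (-(1/2) * v^2)) := by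
  have hb : (0:ℝ) < 1/2 := by norm_num
  have h0 : Integrable (fun v : ℝ => Real.exp (-(1/2) * v^2)) := integrable_exp_neg_mul_sq hb
  have h1 : Integrable (fun v : ℝ => v * Real.exp (-(1/2) * v^2)) := by
    have := integrable_rpow_mul_exp_neg_mul_sq hb (s := 1) (by norm_num)
    simpa [Real.rpow_one] using this
  have h2 : Integrable (fun v : ℝ => v^2 * Real.exp (-(1/2) * v^2)) := by
    have := integrable_rpow_mul_exp_neg_mul_sq hb (s := 2) (by norm_num)
    have heq : ∀ v : ℝ, v ^ (2:ℝ) = v^2 := fun v => by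
      rw [show (2:ℝ) = ((2:ℕ):ℝ) by norm_num, Real.rpow_natCast]
    simpa [heq] using this
  have := ((h0.const_mul q0).add (h1.const_mul q1)).add (h2.const_mul q2)
  refine (congrArg (fun f => Integrable f volume) ?_).mpr this
  funext v
  simp only [Pi.add_apply]
  ring

lemma gaussTail (α : ℝ) :
    (∫ u in Set.Ioi (0:ℝ), Real.exp (α*u - u^2/2))
      = Real.sqrt (2*Real.pi) * Real.exp (α^2/2) * stdCdf α := by
  have step1 : (∫ u in Set.Ioi (0:ℝ), Real.exp (α*u - u^2/2))
      = Real.exp (α^2/2) * ∫ u in Set.Ioi (0:ℝ), Real.exp (-(1/2) * (u - α)^2) := by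
    rw [← MeasureTheory.integral_const_mul]
    congr 1; funext u
    rw [← Real.exp_add]; congr 1; ring
  have himg : (fun v : ℝ => α - v) '' Set.Iio α = Set.Ioi (0:ℝ) := by
    rw [Set.image_const_sub_Iio]; simp
  have hsub : (∫ u in Set.Ioi (0:ℝ), Real.exp (-(1/2) * (u - α)^2))
      = ∫ v in Set.Iio α, Real.exp (-(1/2) * v^2) := by
    have hder : ∀ v ∈ Set.Iio α,
        HasDerivWithinAt (fun v : ℝ => α - v) ((fun _ : ℝ => (-1:ℝ)) v) (Set.Iio α) v := by
      intro v _
      exact ((hasDerivAt_id v).const_sub α).hasDerivWithinAt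
    have hinj : Set.InjOn (fun v : ℝ => α - v) (Set.Iio α) := fun v _ w _ h => by
      dsimp at h; linarith
    rw [← himg, integral_image_eq_integral_abs_deriv_smul measurableSet_Iio hder hinj]
    congr 1; funext v
    simp only [smul_eq_mul]
    rw [abs_neg, abs_one, one_mul]
    congr 1; ring
  have hcdf : (∫ v in Set.Iio α, Real.exp (-(1/2) * v^2))
      = Real.sqrt (2*Real.pi) * stdCdf α := by
    have h1 : (∫ v in Set.Iio α, Real.exp (-(1/2) * v^2))
        = ∫ v in Set.Iic α, Real.exp (-(1/2) * v^2) := setIntegral_congr_set Iio_ae_eq_Iic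
    have h2 : stdCdf α = (Real.sqrt (2*Real.pi))⁻¹ * ∫ v in Set.Iic α, Real.exp (-(1/2) * v^2) := by
      rw [stdCdf, ← MeasureTheory.integral_const_mul]
      congr 1; funext v
      rw [stdPdf]; congr 1; ring
    have hs : (0:ℝ) < Real.sqrt (2*Real.pi) := Real.sqrt_pos.2 (by positivity)
    rw [h1, h2]
    field_simp
  rw [step1, hsub, hcdf]; ring

lemma Flim (α : ℝ) :
    Tendsto (fun u : ℝ => (α*u + α^2 - 1) * Real.exp (α*u - u^2/2)) atTop (𝓝 0) := by
  have hexp0 : Tendsto (fun v : ℝ => Real.exp (-(1/2) * v^2)) atTop (𝓝 0) := by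
    rw [Real.tendsto_exp_comp_nhds_zero]
    have h : Tendsto (fun v:ℝ => v^2) atTop atTop := tendsto_pow_atTop two_ne_zero
    exact Tendsto.const_mul_atTop_of_neg (by norm_num) h
  have hv1 : Tendsto (fun v : ℝ => v * Real.exp (-(1/2) * v^2)) atTop (𝓝 0) := by
    have h := rpow_mul_exp_neg_mul_sq_isLittleO_exp_neg (show (0:ℝ) < 1/2 by norm_num) 1
    have hg0 : Tendsto (fun x : ℝ => Real.exp (-(1/2) * x)) atTop (𝓝 0) := by
      rw [Real.tendsto_exp_comp_nhds_zero]
      exact Tendsto.const_mul_atTop_of_neg (by norm_num) tendsto_id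
    have hO := h.isBigO.trans_tendsto hg0
    apply hO.congr'
    filter_upwards [eventually_ge_atTop (0:ℝ)] with v _
    rw [Real.rpow_one]
  -- F u = g (u - α) where g v = (α*v + 2*α^2 - 1) * exp(α^2/2) * exp(-(1/2)*v^2)
  have hg : Tendsto (fun v : ℝ => (α*v + 2*α^2 - 1) * Real.exp (α^2/2) * Real.exp (-(1/2) * v^2))
      atTop (𝓝 0) := by
    have := ((hv1.const_mul (α * Real.exp (α^2/2))).add
      (hexp0.const_mul ((2*α^2 - 1) * Real.exp (α^2/2))))
    have h2 : Tendsto (fun v : ℝ => α * Real.exp (α^2/2) * (v * Real.exp (-(1/2) * v^2))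
        + (2*α^2 - 1) * Real.exp (α^2/2) * Real.exp (-(1/2) * v^2)) atTop (𝓝 0) := by
      simpa only [mul_zero, add_zero] using this
    apply h2.congr
    intro v; ring
  have hcomp := hg.comp (tendsto_atTop_add_const_right atTop (-α) tendsto_id)
  apply hcomp.congr
  intro u
  show (α*(id u + -α) + 2*α^2 - 1) * Real.exp (α^2/2) * Real.exp (-(1/2) * (id u + -α)^2)
      = (α*u + α^2 - 1) * Real.exp (α*u - u^2/2)
  simp only [id]
  have e1 : Real.exp (α^2/2) * Real.exp (-(1/2) * (u + -α)^2) = Real.exp (α*u - u^2/2) := by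
    rw [← Real.exp_add]; congr 1; ring
  calc (α*(u + -α) + 2*α^2 - 1) * Real.exp (α^2/2) * Real.exp (-(1/2) * (u + -α)^2)
      = (α*(u + -α) + 2*α^2 - 1) * (Real.exp (α^2/2) * Real.exp (-(1/2) * (u + -α)^2)) := by ring
    _ = (α*u + α^2 - 1) * Real.exp (α*u - u^2/2) := by rw [e1]; ring

theorem stmt4 (α c : ℝ) (hα : 0 < α) (hc : 0 < c) :
    (∫ s in Set.Iio (0 : ℝ), ∫ x in Set.Iio (α * Real.sqrt (-s)),
        (-x) * Real.exp (c * x + c ^ 2 * s / 2))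
      = (2 / c ^ 4) * ((1 - α ^ 2) - α ^ 3 * stdCdf α / stdPdf α) ∧
    ((∫ s in Set.Iio (0 : ℝ), ∫ x in Set.Iio (α * Real.sqrt (-s)),
        (-x) * Real.exp (c * x + c ^ 2 * s / 2)) = 0 ↔
      α ^ 3 * stdCdf α = (1 - α ^ 2) * stdPdf α) := by
  have hπ : (0:ℝ) < Real.sqrt (2*Real.pi) := Real.sqrt_pos.2 (by positivity)
  have hpdfpos : 0 < stdPdf α := by
    rw [stdPdf]; positivity
  -- Step 1: the inner integral
  have inner : ∀ s : ℝ,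
      (∫ x in Set.Iio (α * Real.sqrt (-s)), (-x) * Real.exp (c * x + c ^ 2 * s / 2))
      = (1/c^2 - (α * Real.sqrt (-s))/c)
          * Real.exp (c * (α * Real.sqrt (-s)) + c ^ 2 * s / 2) := by
    intro s
    set b := α * Real.sqrt (-s) with hb
    have h1 : ∀ x : ℝ, (-x) * Real.exp (c * x + c ^ 2 * s / 2)
        = (-x * Real.exp (c*x)) * Real.exp (c ^ 2 * s / 2) := by
      intro x; rw [Real.exp_add]; ring
    calc (∫ x in Set.Iio b, (-x) * Real.exp (c * x + c ^ 2 * s / 2))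
        = ∫ x in Set.Iio b, (-x * Real.exp (c*x)) * Real.exp (c ^ 2 * s / 2) := by
          simp_rw [h1]
      _ = (∫ x in Set.Iio b, -x * Real.exp (c*x)) * Real.exp (c ^ 2 * s / 2) :=
          integral_mul_const _ _
      _ = (1/c^2 - b/c) * Real.exp (c * b) * Real.exp (c ^ 2 * s / 2) := by
          rw [innerIntegral c b hc]
      _ = (1/c^2 - b/c) * Real.exp (c * b + c ^ 2 * s / 2) := by
          rw [mul_assoc, ← Real.exp_add]
  have step1 : (∫ s in Set.Iio (0 : ℝ), ∫ x in Set.Iio (α * Real.sqrt (-s)),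
        (-x) * Real.exp (c * x + c ^ 2 * s / 2))
      = ∫ s in Set.Iio (0:ℝ), (1/c^2 - (α * Real.sqrt (-s))/c)
          * Real.exp (c * (α * Real.sqrt (-s)) + c ^ 2 * s / 2) :=
    integral_congr_ae (Eventually.of_forall fun s => inner s)
  -- Step 2: substitution s = -(u/c)^2
  set G : ℝ → ℝ := fun s => (1/c^2 - (α * Real.sqrt (-s))/c)
      * Real.exp (c * (α * Real.sqrt (-s)) + c ^ 2 * s / 2) with hG
  have himg : (fun u : ℝ => -(u/c)^2) '' Set.Ioi 0 = Set.Iio 0 := by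
    ext s
    constructor
    · rintro ⟨u, hu, rfl⟩
      have : 0 < u/c := div_pos hu hc
      simp only [Set.mem_Iio]
      nlinarith
    · intro hs
      refine ⟨c * Real.sqrt (-s), ?_, ?_⟩
      · have : 0 < Real.sqrt (-s) := Real.sqrt_pos.2 (by simpa using hs.out)
        exact mul_pos hc this
      · have h1 : c * Real.sqrt (-s) / c = Real.sqrt (-s) := by field_simp
        show -((c * Real.sqrt (-s))/c)^2 = s
        rw [h1, Real.sq_sqrt (by simp only [Set.mem_Iio] at hs; linarith)]
        ring
  have hder : ∀ u ∈ Set.Ioi (0:ℝ),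
      HasDerivWithinAt (fun u : ℝ => -(u/c)^2) ((fun u : ℝ => -(2*u/c^2)) u) (Set.Ioi 0) u := by
    intro u _
    have h1 : HasDerivAt (fun u : ℝ => -(u/c)^2) (-(2*u/c^2)) u := by
      have h := (((hasDerivAt_id u).div_const c).pow 2).neg
      refine h.congr_deriv ?_
      simp only [id_eq, pow_one, Nat.cast_ofNat]
      rw [show (2:ℕ) - 1 = 1 from rfl, pow_one]
      field_simp
    exact h1.hasDerivWithinAt
  have hinj : Set.InjOn (fun u : ℝ => -(u/c)^2) (Set.Ioi 0) := by
    intro u hu v hv h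
    simp only [Set.mem_Ioi] at hu hv
    dsimp at h
    have h2 : (u/c)^2 = (v/c)^2 := by linarith
    field_simp at h2
    first
      | exact h2
      | nlinarith [h2]
  have step2 : (∫ s in Set.Iio (0:ℝ), G s)
      = ∫ u in Set.Ioi (0:ℝ), |(-(2*u/c^2))| • G (-(u/c)^2) := by
    rw [← himg, integral_image_eq_integral_abs_deriv_smul measurableSet_Ioi hder hinj]
  -- Step 3: simplify the integrand
  have step3 : (∫ u in Set.Ioi (0:ℝ), |(-(2*u/c^2))| • G (-(u/c)^2))
      = ∫ u in Set.Ioi (0:ℝ), (2/c^4) * (u * (1 - α*u) * Real.exp (α*u - u^2/2)) := by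
    apply setIntegral_congr_fun measurableSet_Ioi
    intro u hu
    simp only [Set.mem_Ioi] at hu
    have huc : 0 < u/c := div_pos hu hc
    have habs : |(-(2*u/c^2))| = 2*u/c^2 := by
      rw [abs_neg, abs_of_pos (by positivity)]
    have hsqrt : Real.sqrt (-(-(u/c)^2)) = u/c := by
      rw [neg_neg, Real.sqrt_sq huc.le]
    dsimp only
    rw [smul_eq_mul, habs, hG]
    dsimp only
    rw [hsqrt]
    have hexp : c * (α * (u/c)) + c ^ 2 * (-(u/c)^2) / 2 = α*u - u^2/2 := by
      field_simp
      ring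
    rw [hexp]
    field_simp
  have step4 : (∫ u in Set.Ioi (0:ℝ), (2/c^4) * (u * (1 - α*u) * Real.exp (α*u - u^2/2)))
      = (2/c^4) * ∫ u in Set.Ioi (0:ℝ), u * (1 - α*u) * Real.exp (α*u - u^2/2) :=
    MeasureTheory.integral_const_mul _ _
  -- Step 5: compute J
  have hιE : Integrable (fun u : ℝ => Real.exp (α*u - u^2/2)) := by
    have h := ((integrable_exp_neg_mul_sq (show (0:ℝ) < 1/2 by norm_num)).comp_sub_right
      α).const_mul (Real.exp (α^2/2))
    convert h using 1
    funext u
    rw [show α*u - u^2/2 = α^2/2 + (-(1/2)*(u-α)^2) by ring, Real.exp_add]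
  have hι2 : Integrable (fun u : ℝ => (α^3 + u - α*u^2) * Real.exp (α*u - u^2/2)) := by
    have h := ((gaussPolyInt α (1-2*α^2) (-α)).comp_sub_right α).const_mul (Real.exp (α^2/2))
    convert h using 1
    funext u
    show (α^3 + u - α*u^2) * Real.exp (α*u - u^2/2)
        = Real.exp (α^2/2) * ((α + (1-2*α^2)*(u-α) + (-α)*(u-α)^2) * Real.exp (-(1/2)*(u-α)^2))
    rw [show α*u - u^2/2 = α^2/2 + (-(1/2)*(u-α)^2) by ring, Real.exp_add]
    ring
  have hderF : ∀ u ∈ Set.Ici (0:ℝ),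
      HasDerivAt (fun u : ℝ => (α*u + α^2 - 1) * Real.exp (α*u - u^2/2))
        ((α^3 + u - α*u^2) * Real.exp (α*u - u^2/2)) u := by
    intro u _
    have h1 : HasDerivAt (fun u : ℝ => α*u + α^2 - 1) α u := by
      have := (((hasDerivAt_id u).const_mul α).add_const (α^2)).sub_const 1
      simpa using this
    have h2 : HasDerivAt (fun u : ℝ => α*u - u^2/2) (α - u) u := by
      have := ((hasDerivAt_id u).const_mul α).sub ((hasDerivAt_pow 2 u).div_const 2)
      refine this.congr_deriv ?_
      simp
    have h3 := h1.mul h2.exp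
    refine h3.congr_deriv ?_
    ring
  have hFint : (∫ u in Set.Ioi (0:ℝ), (α^3 + u - α*u^2) * Real.exp (α*u - u^2/2))
      = 1 - α^2 := by
    have h := integral_Ioi_of_hasDerivAt_of_tendsto'
      (f := fun u : ℝ => (α*u + α^2 - 1) * Real.exp (α*u - u^2/2))
      (fun u hu => hderF u hu) hι2.integrableOn (Flim α)
    rw [h]
    norm_num
  have hJ : (∫ u in Set.Ioi (0:ℝ), u * (1 - α*u) * Real.exp (α*u - u^2/2))
      = (1 - α^2) - α^3 * (Real.sqrt (2*Real.pi) * Real.exp (α^2/2) * stdCdf α) := by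
    have hpt : ∀ u : ℝ, u * (1 - α*u) * Real.exp (α*u - u^2/2)
        = (α^3 + u - α*u^2) * Real.exp (α*u - u^2/2) - α^3 * Real.exp (α*u - u^2/2) :=
      fun u => by ring
    simp_rw [hpt]
    rw [integral_sub hι2.integrableOn ((hιE.const_mul (α^3)).integrableOn),
      MeasureTheory.integral_const_mul, hFint, gaussTail]
  -- key: stdCdf/stdPdf
  have hkey : α ^ 3 * stdCdf α / stdPdf α
      = α^3 * (Real.sqrt (2*Real.pi) * Real.exp (α^2/2) * stdCdf α) := by
    rw [div_eq_iff hpdfpos.ne', stdPdf,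
      show -α^2/2 = -(α^2/2) by ring, Real.exp_neg]
    have h1 := Real.exp_pos (α^2/2)
    field_simp
  have main : (∫ s in Set.Iio (0 : ℝ), ∫ x in Set.Iio (α * Real.sqrt (-s)),
        (-x) * Real.exp (c * x + c ^ 2 * s / 2))
      = (2 / c ^ 4) * ((1 - α ^ 2) - α ^ 3 * stdCdf α / stdPdf α) := by
    rw [step1, step2, step3, step4, hJ, hkey]
  refine ⟨main, ?_⟩
  rw [main]
  have h2c : (2/c^4 : ℝ) ≠ 0 := by positivity
  rw [mul_eq_zero]
  constructor
  · rintro (h | h)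
    · exact absurd h h2c
    · have h2 : (1 - α^2 : ℝ) = α ^ 3 * stdCdf α / stdPdf α := by linarith [sub_eq_zero.mp h]
      rw [eq_comm, div_eq_iff hpdfpos.ne'] at h2
      rw [h2]
  · intro h
    right
    rw [sub_eq_zero]
    rw [eq_comm, div_eq_iff hpdfpos.ne']
    rw [h]
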